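/- Let t be a positive integer and let G and H be flower groups of the same type (c₀; c₁, …, c_k). Then there exists a bijection ψ : G → H such that ψ(1_G) = 1_H and ψ(g^t) = ψ(g)^t for every g ∈ G. -/

import Mathlib

/-- A cyclic subgroup `C` of `G` is a μ-subgroup if it is not contained in any cyclic
subgroup of `G` other than `C` itself. -/
def IsMuSubgroup {G : Type*} [Group G] (C : Subgroup G) : Prop :=
  IsCyclic ↥C ∧ ∀ K : Subgroup G, IsCyclic ↥K → C ≤ K → C = K

/-- A noncyclic group `G` is a flower group with pistil `C0` if any two distinct
μ-subgroups of `G` intersect exactly in `C0`. -/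
def IsFlowerGroup {G : Type*} [Group G] (C0 : Subgroup G) : Prop :=
  ¬ IsCyclic G ∧
    ∀ C C' : Subgroup G, IsMuSubgroup C → IsMuSubgroup C' → C ≠ C' → C ⊓ C' = C0

/-!
The petals of a flower group cover it, are cyclic, all contain the pistil, and two distinct
petals meet exactly in the pistil. Fix generators `a`, `b` of the two pistils; they have the same
order. In a finite cyclic group of order `n`, every element of order `d` is the `n / d`-th power
of a generator (lift a unit of `ZMod d` to a unit of `ZMod n`), so each petal of `G` is isomorphic
to the corresponding petal of `H` by an isomorphism sending `a` to `b`. These isomorphisms agree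
on the pistil, which is where petals overlap, so they glue to a bijection `G ≃ H` that is a group
isomorphism on each petal and therefore commutes with powers.
-/

theorem Nat.exists_coprime_modEq {n d u : ℕ} (hn : n ≠ 0) (hd : d ∣ n) (hu : u.Coprime d) :
    ∃ s, s.Coprime n ∧ s ≡ u [MOD d] := by
  have : NeZero n := ⟨hn⟩
  obtain ⟨σ, hσ⟩ := ZMod.unitsMap_surjective hd (ZMod.unitOfCoprime u hu)
  refine ⟨(σ : ZMod n).val, ZMod.val_coe_unit_coprime σ, ?_⟩
  rw [← ZMod.natCast_eq_natCast_iff, ZMod.natCast_val, ← ZMod.unitsMap_val hd, hσ,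
    ZMod.coe_unitOfCoprime]

open Subgroup

section Cyclic

variable {A B : Type*} [Group A] [Group B]

theorem mem_zpowers_of_orderOf_eq_card [Finite A] {g : A} (hg : orderOf g = Nat.card A)
    (x : A) : x ∈ zpowers g := by
  rw [eq_top_of_card_eq (zpowers g) (by rw [Nat.card_zpowers, hg])]
  exact mem_top x

theorem IsCyclic.exists_orderOf_eq_card_pow_eq [Finite A] [IsCyclic A] (a : A) :
    ∃ g : A, orderOf g = Nat.card A ∧ g ^ (Nat.card A / orderOf a) = a := by
  obtain ⟨g₀, hg₀⟩ := IsCyclic.exists_ofOrder_eq_natCard (α := A)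
  obtain ⟨m, rfl⟩ : ∃ m : ℕ, g₀ ^ m = a := (Submonoid.mem_powers_iff _ _).mp
    (mem_powers_iff_mem_zpowers.mpr (mem_zpowers_of_orderOf_eq_card hg₀ a))
  set n := Nat.card A
  have hn : 0 < n := Nat.card_pos
  have he : n.gcd m ∣ n := Nat.gcd_dvd_left n m
  have hu : (m / n.gcd m).Coprime (n / n.gcd m) :=
    (Nat.coprime_div_gcd_div_gcd (Nat.gcd_pos_of_pos_left m hn)).symm
  obtain ⟨s, hsn, hsu⟩ := Nat.exists_coprime_modEq hn.ne' (Nat.div_dvd_of_dvd he) hu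
  have hs : (orderOf g₀).Coprime s := hg₀ ▸ hsn.symm
  refine ⟨g₀ ^ s, by rw [hs.orderOf_pow, hg₀], ?_⟩
  rw [orderOf_pow, hg₀, Nat.div_div_self he hn.ne', ← pow_mul, pow_eq_pow_iff_modEq, hg₀]
  simpa only [Nat.div_mul_cancel he, Nat.div_mul_cancel (Nat.gcd_dvd_right n m)]
    using hsu.mul_right' (n.gcd m)

theorem IsCyclic.exists_mulEquiv_apply_eq [Finite A] [IsCyclic A] [IsCyclic B]
    (hcard : Nat.card A = Nat.card B) {a : A} {b : B} (hab : orderOf a = orderOf b) :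
    ∃ φ : A ≃* B, φ a = b := by
  have : Finite B := Nat.finite_of_card_ne_zero (hcard ▸ Nat.card_pos.ne')
  obtain ⟨g, hg, ha⟩ := IsCyclic.exists_orderOf_eq_card_pow_eq a
  obtain ⟨h, hh, hb⟩ := IsCyclic.exists_orderOf_eq_card_pow_eq b
  let φ := mulEquivOfOrderOfEq (mem_zpowers_of_orderOf_eq_card hg)
    (mem_zpowers_of_orderOf_eq_card hh) (hg.trans (hcard.trans hh.symm))
  refine ⟨φ, ?_⟩
  rw [← ha, map_pow, mulEquivOfOrderOfEq_apply_gen, hcard, hab, hb]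

end Cyclic

theorem Set.exists_equiv_of_iUnion_eq_univ {ι α β : Type*} {S : ι → Set α}
    {T : ι → Set β} (e : ∀ i, S i ≃ T i) (hS : ⋃ i, S i = univ) (hT : ⋃ i, T i = univ)
    (he : ∀ i j x (hi : x ∈ S i) (hj : x ∈ S j), (e i ⟨x, hi⟩ : β) = e j ⟨x, hj⟩)
    (he' : ∀ i j y (hi : y ∈ T i) (hj : y ∈ T j),
      ((e i).symm ⟨y, hi⟩ : α) = (e j).symm ⟨y, hj⟩) :
    ∃ ψ : α ≃ β, ∀ i (x : S i), ψ x = e i x := by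
  let f := liftCover S (fun i x => (e i x : β)) he hS
  let f' := liftCover T (fun i y => ((e i).symm y : α)) he' hT
  have hf : ∀ i (x : S i), f x = e i x := fun i x => liftCover_coe x
  have hf' : ∀ i (y : T i), f' y = (e i).symm y := fun i y => liftCover_coe y
  refine ⟨⟨f, f', fun x => ?_, fun y => ?_⟩, hf⟩
  · obtain ⟨i, hi⟩ := mem_iUnion.mp (hS ▸ mem_univ x)
    rw [hf i ⟨x, hi⟩, hf' i, Equiv.symm_apply_apply]
  · obtain ⟨i, hi⟩ := mem_iUnion.mp (hT ▸ mem_univ y)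
    rw [hf' i ⟨y, hi⟩, hf i, Equiv.apply_symm_apply]

section Glue

variable {G H : Type*} [Group G] [Group H] {ι : Type*} {P : ι → Subgroup G}
  {Q : ι → Subgroup H} {a : G} {b : H}

theorem coe_mulEquiv_apply_eq_of_inf_le_zpowers
    (hPa : ∀ i j, i ≠ j → P i ⊓ P j ≤ zpowers a) (φ : ∀ i, P i ≃* Q i)
    (ha : ∀ i, a ∈ P i) (hb : ∀ i, b ∈ Q i)
    (hφ : ∀ i, φ i ⟨a, ha i⟩ = ⟨b, hb i⟩) (i j : ι) (x : G)
    (hi : x ∈ P i) (hj : x ∈ P j) :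
    (φ i ⟨x, hi⟩ : H) = φ j ⟨x, hj⟩ := by
  rcases eq_or_ne i j with rfl | hij
  · rfl
  obtain ⟨k, rfl⟩ := mem_zpowers_iff.mp (hPa i j hij ⟨hi, hj⟩)
  have hpow : ∀ l, (φ l ⟨a ^ k, zpow_mem (ha l) k⟩ : H) = b ^ k := fun l => by
    rw [show (⟨a ^ k, _⟩ : P l) = ⟨a, ha l⟩ ^ k from rfl, map_zpow, hφ]; rfl
  exact (hpow i).trans (hpow j).symm

theorem exists_equiv_of_mulEquiv_of_inf_le_zpowers (hP : ∀ x, ∃ i, x ∈ P i)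
    (hQ : ∀ y, ∃ i, y ∈ Q i) (hPa : ∀ i j, i ≠ j → P i ⊓ P j ≤ zpowers a)
    (hQb : ∀ i j, i ≠ j → Q i ⊓ Q j ≤ zpowers b)
    (φ : ∀ i, P i ≃* Q i) (ha : ∀ i, a ∈ P i) (hb : ∀ i, b ∈ Q i)
    (hφ : ∀ i, φ i ⟨a, ha i⟩ = ⟨b, hb i⟩) :
    ∃ ψ : G ≃ H, ∀ i (x : P i), ψ x = φ i x :=
  Set.exists_equiv_of_iUnion_eq_univ (S := fun i => (P i : Set G))
    (T := fun i => (Q i : Set H)) (fun i => (φ i).toEquiv)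
    (Set.iUnion_eq_univ_iff.mpr hP) (Set.iUnion_eq_univ_iff.mpr hQ)
    (coe_mulEquiv_apply_eq_of_inf_le_zpowers hPa φ ha hb hφ)
    (coe_mulEquiv_apply_eq_of_inf_le_zpowers hQb (fun i => (φ i).symm) hb ha
      fun i => (MulEquiv.symm_apply_eq _).mpr (hφ i).symm)

end Glue

section Flower

variable {G : Type*} [Group G] [Finite G]

theorem exists_isMuSubgroup_mem (x : G) : ∃ C : Subgroup G, IsMuSubgroup C ∧ x ∈ C := by
  obtain ⟨C, hxC, hC⟩ := Finite.exists_le_maximal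
    (p := fun K : Subgroup G => IsCyclic K ∧ x ∈ K) ⟨isCyclic_zpowers x, mem_zpowers x⟩
  exact ⟨C, ⟨hC.prop.1, fun K hK hCK => le_antisymm hCK (hC.2 ⟨hK, hCK hC.prop.2⟩ hCK)⟩,
    hC.prop.2⟩

theorem IsFlowerGroup.le_of_isMuSubgroup {C₀ C : Subgroup G} (hG : IsFlowerGroup C₀)
    (hC : IsMuSubgroup C) : C₀ ≤ C := by
  obtain ⟨x, hx⟩ : ∃ x, x ∉ C := by
    by_contra! h
    exact hG.1 ((topEquiv.isCyclic).mp ((eq_top_iff' C).mpr h ▸ hC.1))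
  obtain ⟨C', hC', hxC'⟩ := exists_isMuSubgroup_mem x
  rw [← hG.2 C C' hC hC' fun h => hx (h ▸ hxC')]
  exact inf_le_left

theorem exists_mem_of_forall_isMuSubgroup_iff {ι : Type*} {P : ι → Subgroup G}
    (hP : ∀ C : Subgroup G, IsMuSubgroup C ↔ ∃ i, C = P i) (x : G) : ∃ i, x ∈ P i := by
  obtain ⟨C, hC, hxC⟩ := exists_isMuSubgroup_mem x
  obtain ⟨i, rfl⟩ := (hP C).mp hC
  exact ⟨i, hxC⟩

theorem IsFlowerGroup.isCyclic {C₀ : Subgroup G} (hG : IsFlowerGroup C₀) : IsCyclic C₀ := by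
  obtain ⟨C, hC, -⟩ := exists_isMuSubgroup_mem (1 : G)
  have := hC.1
  exact isCyclic_of_le (hG.le_of_isMuSubgroup hC)

end Flower

theorem stmt12_general (t : ℕ)
    {G H : Type*} [Group G] [Finite G] [Group H] [Finite H]
    (CG : Subgroup G) (CH : Subgroup H)
    (hG : IsFlowerGroup CG) (hH : IsFlowerGroup CH)
    (k c0 : ℕ) (c : Fin k → ℕ)
    (PG : Fin k → Subgroup G) (PH : Fin k → Subgroup H)
    (hPGinj : Function.Injective PG) (hPHinj : Function.Injective PH)
    (hPG : ∀ C : Subgroup G, IsMuSubgroup C ↔ ∃ i, C = PG i)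
    (hPH : ∀ C : Subgroup H, IsMuSubgroup C ↔ ∃ i, C = PH i)
    (hcG0 : Nat.card CG = c0) (hcH0 : Nat.card CH = c0)
    (hcG : ∀ i, Nat.card (PG i) = c i) (hcH : ∀ i, Nat.card (PH i) = c i) :
    ∃ ψ : G ≃ H, ψ 1 = 1 ∧ ∀ g : G, ψ (g ^ t) = ψ g ^ t := by
  have hPGμ i : IsMuSubgroup (PG i) := (hPG _).mpr ⟨i, rfl⟩
  have hPHμ i : IsMuSubgroup (PH i) := (hPH _).mpr ⟨i, rfl⟩
  obtain ⟨a, rfl⟩ := (CG.isCyclic_iff_exists_zpowers_eq_top).mp hG.isCyclic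
  obtain ⟨b, rfl⟩ := (CH.isCyclic_iff_exists_zpowers_eq_top).mp hH.isCyclic
  have ha i : a ∈ PG i := hG.le_of_isMuSubgroup (hPGμ i) (mem_zpowers a)
  have hb i : b ∈ PH i := hH.le_of_isMuSubgroup (hPHμ i) (mem_zpowers b)
  have hab : orderOf a = orderOf b := by
    rw [← Nat.card_zpowers, hcG0, ← hcH0, Nat.card_zpowers]
  choose φ hφ using fun i =>
    have := (hPGμ i).1
    have := (hPHμ i).1
    IsCyclic.exists_mulEquiv_apply_eq (a := (⟨a, ha i⟩ : PG i)) (b := (⟨b, hb i⟩ : PH i))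
      ((hcG i).trans (hcH i).symm) (by simpa only [Subgroup.orderOf_mk] using hab)
  have coverG := exists_mem_of_forall_isMuSubgroup_iff hPG
  obtain ⟨ψ, hψ⟩ := exists_equiv_of_mulEquiv_of_inf_le_zpowers coverG
    (exists_mem_of_forall_isMuSubgroup_iff hPH)
    (fun i j hij => (hG.2 _ _ (hPGμ i) (hPGμ j) (hPGinj.ne hij)).le)
    (fun i j hij => (hH.2 _ _ (hPHμ i) (hPHμ j) (hPHinj.ne hij)).le) φ ha hb hφ
  have hpow (g : G) (n : ℕ) : ψ (g ^ n) = ψ g ^ n := by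
    obtain ⟨i, hi⟩ := coverG g
    simpa only [hψ i ⟨g, hi⟩, map_pow, SubgroupClass.coe_pow] using hψ i (⟨g, hi⟩ ^ n)
  exact ⟨ψ, by simpa using hpow 1 0, fun g => hpow g t⟩

/-- If G and H are flower groups of the same type (c₀; c₁, …, c_k), then
there is a bijection ψ : G → H with ψ(1) = 1 and ψ(g^t) = ψ(g)^t for all g. -/
theorem stmt12 (t : ℕ) (ht : 0 < t)
    {G H : Type*} [Group G] [Finite G] [Group H] [Finite H]
    (CG : Subgroup G) (CH : Subgroup H)
    (hG : IsFlowerGroup CG) (hH : IsFlowerGroup CH)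
    (k c0 : ℕ) (c : Fin k → ℕ)
    (PG : Fin k → Subgroup G) (PH : Fin k → Subgroup H)
    (hPGinj : Function.Injective PG) (hPHinj : Function.Injective PH)
    (hPG : ∀ C : Subgroup G, IsMuSubgroup C ↔ ∃ i, C = PG i)
    (hPH : ∀ C : Subgroup H, IsMuSubgroup C ↔ ∃ i, C = PH i)
    (hcG0 : Nat.card CG = c0) (hcH0 : Nat.card CH = c0)
    (hcG : ∀ i, Nat.card (PG i) = c i) (hcH : ∀ i, Nat.card (PH i) = c i) :
    ∃ ψ : G ≃ H, ψ 1 = 1 ∧ ∀ g : G, ψ (g ^ t) = ψ g ^ t :=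
  stmt12_general t CG CH hG hH k c0 c PG PH hPGinj hPHinj hPG hPH hcG0 hcH0 hcG hcH
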